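/- arXiv:1410.5671 — 3 statements merged into one kernel-verified Lean document; each statement's English description precedes it below -/
import Mathlib

section
/- Let G be a finite group acting on a finite nonempty set X such that every element g ∈ G fixes some point of X, but no point of X is fixed by all of G. Then G is not cyclic, and the action of G on X is not transitive. -/
/-!
If `g` generates `G`, a point fixed by `g` is fixed by every power of `g`, i.e. by all of `G`;
so a cyclic group in which every element has a fixed point has a global fixed point.
For transitivity we use Jordan's theorem: a finite group acting transitively on a set with at
least two points contains a derangement. Indeed, by Burnside's lemma the numbers of fixed points
of the elements of `G` average to the number of orbits, `1`; the identity fixes at least two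
points, so some element fixes none.
-/

namespace MulAction

variable {G X : Type*} [Group G] [MulAction G X]

theorem fixedBy_subset_fixedPoints_of_zpow_surjective {g : G}
    (hg : Function.Surjective (g ^ · : ℤ → G)) : fixedBy X g ⊆ fixedPoints G X := by
  intro x hx a
  obtain ⟨n, rfl⟩ := hg a
  exact mem_fixedBy_zpow hx n

theorem finite_of_isPretransitive [Finite G] [IsPretransitive G X] [Nonempty X] : Finite X :=
  let x : X := Classical.arbitrary X
  Finite.of_surjective (· • x) (exists_smul_eq G x)

theorem exists_forall_smul_ne_of_isPretransitive [Finite G] [IsPretransitive G X]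
    [Nontrivial X] : ∃ g : G, ∀ x : X, g • x ≠ x := by
  classical
  by_contra! hfix
  have : Finite X := finite_of_isPretransitive (G := G)
  have : Fintype G := Fintype.ofFinite G
  have : Fintype X := Fintype.ofFinite X
  have : Fintype (orbitRel.Quotient G X) := Fintype.ofFinite _
  obtain ⟨_⟩ := (pretransitive_iff_unique_quotient_of_nonempty G X).mp ‹_›
  have burnside := sum_card_fixedBy_eq_card_orbits_mul_card_group G X
  rw [Fintype.card_unique, one_mul] at burnside
  have card_lt : ∑ _g : G, 1 < ∑ g : G, Fintype.card (fixedBy X g) := by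
    refine Finset.sum_lt_sum (fun g _ => ?_) ⟨1, Finset.mem_univ _, ?_⟩
    · obtain ⟨x, hx⟩ := hfix g
      exact Fintype.card_pos_iff.mpr ⟨⟨x, hx⟩⟩
    · simpa [Fintype.card_subtype] using Fintype.one_lt_card
  rw [burnside, Finset.sum_const, Finset.card_univ, smul_eq_mul, mul_one] at card_lt
  exact lt_irrefl _ card_lt

end MulAction

theorem not_cyclic_and_not_transitive_of_pointwise_fixed_general
    (G X : Type*) [Group G] [Fintype G] [MulAction G X]
    (hfix : ∀ g : G, ∃ x : X, g • x = x)
    (hnofix : ¬ ∃ x : X, ∀ g : G, g • x = x) :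
    ¬ IsCyclic G ∧ ¬ (∀ x y : X, ∃ g : G, g • x = y) := by
  constructor
  · rintro ⟨g, hg⟩
    obtain ⟨x, hx⟩ := hfix g
    exact hnofix ⟨x, MulAction.fixedBy_subset_fixedPoints_of_zpow_surjective hg hx⟩
  · intro htrans
    have : MulAction.IsPretransitive G X := ⟨htrans⟩
    have : Nontrivial X := by
      obtain ⟨x, -⟩ := hfix 1
      obtain ⟨g, hgx⟩ := not_forall.mp (not_exists.mp hnofix x)
      exact nontrivial_of_ne _ _ hgx
    obtain ⟨g, hg⟩ := MulAction.exists_forall_smul_ne_of_isPretransitive (G := G) (X := X)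
    obtain ⟨x, hx⟩ := hfix g
    exact hg x hx

theorem not_cyclic_and_not_transitive_of_pointwise_fixed
    (G X : Type*) [Group G] [Fintype G] [Fintype X] [Nonempty X] [MulAction G X]
    (hfix : ∀ g : G, ∃ x : X, g • x = x)
    (hnofix : ¬ ∃ x : X, ∀ g : G, g • x = x) :
    ¬ IsCyclic G ∧ ¬ (∀ x y : X, ∃ g : G, g • x = y) :=
  not_cyclic_and_not_transitive_of_pointwise_fixed_general G X hfix hnofix
end

section
/- Let a be an integer which is not a perfect square. Then there exist infinitely many primes p such that a is not a quadratic residue modulo p. -/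
/-!
Write `a = t² d` with `d` squarefree; then `d ≠ 1` and `J(a | p) = J(d | p)` for primes
`p ∤ t`. The Jacobi symbol `J(d | ·)` takes the value `-1` at some odd `b`: at `3` or `5` if
`d ∈ {-1, 2, -2}`, and otherwise, for an odd prime `l ∣ d`, at any `b ≡ 1 [MOD 4 (d / l)]`
that is a nonresidue mod `l`, by reciprocity. Since `J(d | ·)` is periodic modulo `4 |d|` on
odd numbers, Dirichlet's theorem on primes in the residue class of `b` finishes the proof.
-/

open scoped NumberTheorySymbols

theorem Int.exists_sq_mul_squarefree (a : ℤ) : ∃ t d : ℤ, t ^ 2 * d = a ∧ Squarefree d := by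
  obtain ⟨s, t, hst, hs⟩ := Nat.sq_mul_squarefree a.natAbs
  rcases Int.natAbs_eq a with ha | ha
  · exact ⟨t, s, by rw [ha, ← hst]; push_cast; ring, Int.squarefree_natCast.mpr hs⟩
  · refine ⟨t, -s, by rw [ha, ← hst]; push_cast; ring, ?_⟩
    exact Int.squarefree_natAbs.mp (by simpa using hs)

theorem Nat.dvd_two_of_squarefree_of_primeFactors_subset {n : ℕ} (hn : Squarefree n)
    (h : n.primeFactors ⊆ {2}) : n ∣ 2 := by
  simpa [Nat.prod_primeFactors_of_squarefree hn] using
    Finset.prod_dvd_prod_of_subset _ _ id h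

namespace jacobiSym

theorem coprime_four_mul_natAbs_of_eq_neg_one {a : ℤ} {b : ℕ} (hb : Odd b) (h : J(a | b) = -1) :
    b.Coprime (4 * a.natAbs) := by
  have hab : a.gcd b = 1 := by
    by_contra hab
    have : NeZero b := ⟨hb.pos.ne'⟩
    rw [(eq_zero_iff_not_coprime.mpr hab)] at h
    exact absurd h (by decide)
  have h4 : b.Coprime 4 := by
    simpa using (Nat.coprime_two_right.mpr hb).pow_right 2
  exact h4.mul_right (Nat.Coprime.symm (by simpa [Int.gcd] using hab))

theorem infinite_setOf_prime_and_eq_neg_one {a : ℤ} {b : ℕ} (hb : Odd b) (h : J(a | b) = -1) :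
    {p : ℕ | p.Prime ∧ J(a | p) = -1}.Infinite := by
  have hcop := coprime_four_mul_natAbs_of_eq_neg_one hb h
  have ha : a ≠ 0 := by
    rintro rfl
    rw [Int.natAbs_zero, mul_zero, Nat.coprime_zero_right] at hcop
    subst hcop
    exact absurd h (by norm_num)
  have : NeZero (4 * a.natAbs) := ⟨by positivity⟩
  refine (Nat.infinite_setOfPred_prime_and_eq_mod
    ((ZMod.isUnit_iff_coprime b _).mpr hcop)).mono ?_
  rintro p ⟨hp, hpb⟩
  have hpb : p ≡ b [MOD 4 * a.natAbs] := (ZMod.natCast_eq_natCast_iff _ _ _).mp hpb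
  have hp_odd : Odd p :=
    Nat.odd_iff.mpr <| Eq.trans (hpb.of_dvd (dvd_mul_of_dvd_left (by norm_num : 2 ∣ 4) _))
      (Nat.odd_iff.mp hb)
  exact ⟨hp, by rw [mod_right a hp_odd, hpb, ← mod_right a hb, h]⟩

theorem exists_odd_eq_neg_one_of_prime_mul {l : ℕ} (hl : l.Prime) (hl2 : l ≠ 2) {e : ℤ}
    (he : ¬ (l : ℤ) ∣ e) : ∃ b : ℕ, Odd b ∧ J(l * e | b) = -1 := by
  have := Fact.mk hl
  obtain ⟨u, hu⟩ := FiniteField.exists_nonsquare (F := ZMod l) (by rwa [ZMod.ringChar_zmod_n])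
  have hl4 : l.Coprime 4 := by
    simpa using (Nat.coprime_two_right.mpr (hl.odd_of_ne_two hl2)).pow_right 2
  have hle : l.Coprime e.natAbs :=
    hl.coprime_iff_not_dvd.mpr (Int.ofNat_dvd_left.not.mp he)
  obtain ⟨b, hbl, hbe⟩ := Nat.chineseRemainder (hl4.mul_right hle) u.val 1
  have he0 : 0 < e.natAbs := Int.natAbs_pos.mpr (by rintro rfl; exact he (dvd_zero _))
  have hb4 : b % 4 = 1 := hbe.of_mul_right _
  have hb : Odd b := Nat.odd_iff.mpr (by omega)
  refine ⟨b, hb, ?_⟩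
  have hJl : J(l | b) = -1 := by
    rw [quadratic_reciprocity_one_mod_four' (hl.odd_of_ne_two hl2) hb4,
      ZMod.nonsquare_iff_jacobiSym_eq_neg_one, Int.cast_natCast,
      (ZMod.natCast_eq_natCast_iff' _ _ _).mpr hbl, ZMod.natCast_zmod_val]
    exact hu
  have hJe : J(e | b) = 1 := by
    rw [mod_right e hb, hbe, Nat.mod_eq_of_lt (by omega), one_right]
  rw [mul_left, hJl, hJe, mul_one]

theorem exists_odd_eq_neg_one_of_squarefree {d : ℤ} (hd : Squarefree d) (hd1 : d ≠ 1) :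
    ∃ b : ℕ, Odd b ∧ J(d | b) = -1 := by
  by_cases h : ∃ l : ℕ, l.Prime ∧ l ≠ 2 ∧ (l : ℤ) ∣ d
  · obtain ⟨l, hl, hl2, e, rfl⟩ := h
    refine exists_odd_eq_neg_one_of_prime_mul hl hl2 fun ⟨f, hf⟩ => ?_
    exact (Nat.prime_iff_prime_int.mp hl).not_isUnit (hd l ⟨f, by rw [hf]; ring⟩)
  · push Not at h
    have h2 : d.natAbs ∣ 2 := by
      refine Nat.dvd_two_of_squarefree_of_primeFactors_subset (Int.squarefree_natAbs.mpr hd) ?_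
      intro p hp
      have hp := Nat.mem_primeFactors.mp hp
      by_contra hp2
      exact h p hp.1 (by simpa using hp2) (Int.ofNat_dvd_left.mpr hp.2.1)
    rcases (Nat.dvd_prime Nat.prime_two).mp h2 with h | h <;>
      rcases Int.natAbs_eq_iff.mp h with rfl | rfl
    · exact absurd rfl hd1
    · exact ⟨3, by decide, by norm_num⟩
    · exact ⟨3, by decide, by norm_num⟩
    · exact ⟨5, by decide, by norm_num⟩

end jacobiSym

theorem infinitely_many_nonresidues (a : ℤ) (ha : ¬ ∃ x : ℤ, x ^ 2 = a) :
    {p : ℕ | p.Prime ∧ ¬ ∃ x : ZMod p, x ^ 2 = (a : ZMod p)}.Infinite := by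
  obtain ⟨t, d, rfl, hd⟩ := Int.exists_sq_mul_squarefree a
  have ht : t.natAbs ≠ 0 := Int.natAbs_ne_zero.mpr (by rintro rfl; exact ha ⟨0, by ring⟩)
  obtain ⟨b, hb, hdb⟩ :=
    jacobiSym.exists_odd_eq_neg_one_of_squarefree hd
      (by rintro rfl; exact ha ⟨t, (mul_one _).symm⟩)
  refine ((jacobiSym.infinite_setOf_prime_and_eq_neg_one hb hdb).sdiff
    (Set.finite_le_nat t.natAbs)).mono ?_
  rintro p ⟨⟨hp, hdp⟩, hpt⟩
  have htp : t.gcd p = 1 := (Nat.coprime_of_lt_prime ht (not_le.mp hpt) hp).symm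
  refine ⟨hp, fun ⟨x, hx⟩ ↦ ?_⟩
  refine ZMod.nonsquare_of_jacobiSym_eq_neg_one ?_ ⟨x, by rw [← hx, sq]⟩
  rw [jacobiSym.mul_left, jacobiSym.sq_one' htp, hdp, one_mul]
end

section
/- Let p be a prime with p ≡ 1 (mod 25). Then for every prime l ≠ 5, at least one of the following congruences is solvable: x^2 ≡ 5 (mod l), or x^5 ≡ p (mod l). -/
/-! If `l ≡ 1 (mod 5)`, then `l` is a square mod `5`, so by quadratic reciprocity (`5 ≡ 1 (mod 4)`)
`5` is a square mod `l`. Otherwise `5` is prime to `l - 1 = #(ZMod l)ˣ`, so `x ↦ x ^ 5` is a bijection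
of `ZMod l` and every residue, in particular `p`, is a fifth power. -/

theorem FiniteField.exists_pow_eq_of_coprime {K : Type*} [Field K] [Finite K] {n : ℕ}
    (hn0 : n ≠ 0) (hn : (Nat.card K - 1).Coprime n) (a : K) : ∃ x : K, x ^ n = a := by
  rcases eq_or_ne a 0 with rfl | ha
  · exact ⟨0, zero_pow hn0⟩
  · rw [← Nat.card_units] at hn
    obtain ⟨u, hu⟩ := hn.pow_left_bijective.surjective (Units.mk0 a ha)
    exact ⟨u, by simpa using congrArg Units.val hu⟩

theorem ZMod.isSquare_prime_of_mod_eq_one {q l : ℕ} [Fact q.Prime] [Fact l.Prime]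
    (hq : q % 4 = 1) (hl : l % q = 1) : IsSquare (q : ZMod l) := by
  have hl2 : l ≠ 2 := by
    rintro rfl
    have hq2 : 2 < q := by have := (Fact.out : q.Prime).two_le; omega
    rw [Nat.mod_eq_of_lt hq2] at hl
    omega
  rw [← ZMod.exists_sq_eq_prime_iff_of_mod_four_eq_one hq hl2, ← ZMod.natCast_mod, hl,
    Nat.cast_one]
  exact IsSquare.one

theorem local_solubility_quintic_example_general (p l : ℕ) (hl : l.Prime) :
    (∃ x : ZMod l, x ^ 2 = 5) ∨ (∃ x : ZMod l, x ^ 5 = (p : ZMod l)) := by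
  have : Fact l.Prime := ⟨hl⟩
  have : Fact (Nat.Prime 5) := ⟨by norm_num⟩
  by_cases h5 : l % 5 = 1
  · obtain ⟨x, hx⟩ := ZMod.isSquare_prime_of_mod_eq_one (q := 5) (by norm_num) h5
    exact Or.inl ⟨x, by rw [sq, ← hx, Nat.cast_ofNat]⟩
  · refine Or.inr (FiniteField.exists_pow_eq_of_coprime (by norm_num) ?_ _)
    rw [Nat.card_zmod, Nat.coprime_comm, Nat.Prime.coprime_iff_not_dvd Fact.out]
    have := hl.two_le
    omega

theorem local_solubility_quintic_example (p l : ℕ) (hp : p.Prime) (hl : l.Prime)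
    (hmod : p % 25 = 1) (hne : l ≠ 5) :
    (∃ x : ZMod l, x ^ 2 = 5) ∨ (∃ x : ZMod l, x ^ 5 = (p : ZMod l)) :=
  local_solubility_quintic_example_general p l hl
end
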